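/- The function φ̄(x) := (φ̄₁(x), φ̄₂(x)) with φ̄₁(x) = e^{iμ/2} E(x)⁻¹ (1 - (i/2) q(x) ∫_x^∞ r(y) dy) and φ̄₂(x) = -e^{iμ/2} E(x) ∫_x^∞ r(y) dy satisfies the zero-energy system φ̄₁' = p φ̄₂, φ̄₂' = s φ̄₁, where p = ((i/2) q' + (1/4) q² r) E⁻² and s = r E². -/

import Mathlib

open Complex MeasureTheory Set

/-!
The fundamental theorem of calculus gives `E' = (i/2) q r E` and `(∫ₓ^∞ r)' = -r`; both
equations then follow from the product rule, the `q² r` term of `p` coming from `i² = -1`.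
-/

theorem SchwartzMap.integrable_mul {D 𝕜 : Type*} [NormedAddCommGroup D] [NormedSpace ℝ D]
    [MeasurableSpace D] [BorelSpace D] [SecondCountableTopology D] {μ : Measure D}
    [μ.HasTemperateGrowth] [RCLike 𝕜] (f g : SchwartzMap D 𝕜) :
    Integrable (fun x ↦ f x * g x) μ :=
  g.integrable.bdd_mul f.continuous.aestronglyMeasurable
    (ae_of_all _ fun x ↦ f.norm_le_seminorm 𝕜 x)

section IntegralDeriv

variable {F : Type*} [NormedAddCommGroup F] [NormedSpace ℝ F] [CompleteSpace F] {f : ℝ → F}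
  {x : ℝ}

theorem hasDerivAt_integral_Iic (hf : Integrable f) (hx : ContinuousAt f x) :
    HasDerivAt (fun u ↦ ∫ y in Iic u, f y) (f x) x := by
  have hsplit :
      (fun u ↦ ∫ y in Iic u, f y) = fun u ↦ (∫ y in Iic x, f y) + ∫ y in x..u, f y := by
    funext u
    rw [← intervalIntegral.integral_Iic_sub_Iic hf.integrableOn hf.integrableOn, add_sub_cancel]
  rw [hsplit]
  exact (intervalIntegral.integral_hasDerivAt_right hf.intervalIntegrable
    hf.aestronglyMeasurable.stronglyMeasurableAtFilter hx).const_add _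

theorem hasDerivAt_integral_Ioi (hf : Integrable f) (hx : ContinuousAt f x) :
    HasDerivAt (fun u ↦ ∫ y in Ioi u, f y) (-f x) x := by
  have hsplit : (fun u ↦ ∫ y in Ioi u, f y) = fun u ↦ (∫ y, f y) - ∫ y in Iic u, f y := by
    funext u
    rw [← intervalIntegral.integral_Iic_add_Ioi hf.integrableOn hf.integrableOn,
      add_sub_cancel_left]
  rw [hsplit]
  exact (hasDerivAt_integral_Iic hf hx).const_sub _

end IntegralDeriv

theorem hasDerivAt_cexp_integral_Iic {f : ℝ → ℂ} {x : ℝ} (hf : Integrable f)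
    (hx : ContinuousAt f x) (c : ℂ) :
    HasDerivAt (fun u ↦ exp (c * ∫ y in Iic u, f y))
      (c * f x * exp (c * ∫ y in Iic x, f y)) x := by
  simpa only [mul_comm] using ((hasDerivAt_integral_Iic hf hx).const_mul c).cexp

theorem zero_energy_jost_phibar_ps_general
    (q r : SchwartzMap ℝ ℂ)
    (E : ℝ → ℂ) (hE : ∀ x, E x = Complex.exp ((I / 2) * ∫ y in Set.Iic x, q y * r y))
    (μ : ℂ)
    (p s : ℝ → ℂ)
    (hp : ∀ x, p x = ((I / 2) * deriv q x + (1 / 4) * (q x) ^ 2 * r x) * (E x) ^ (-2 : ℤ))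
    (hs : ∀ x, s x = r x * (E x) ^ 2)
    (φb₁ φb₂ : ℝ → ℂ)
    (hφb₁ : ∀ x, φb₁ x = Complex.exp (I * μ / 2) * (E x)⁻¹ *
      (1 - (I / 2) * q x * ∫ y in Set.Ioi x, r y))
    (hφb₂ : ∀ x, φb₂ x = -Complex.exp (I * μ / 2) * E x * ∫ y in Set.Ioi x, r y) :
    (∀ x, HasDerivAt φb₁ (p x * φb₂ x) x) ∧ (∀ x, HasDerivAt φb₂ (s x * φb₁ x) x) := by
  obtain rfl := funext hφb₁
  obtain rfl := funext hφb₂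
  have hE' (x : ℝ) : HasDerivAt E (I / 2 * (q x * r x) * E x) x := by
    rw [funext hE]
    exact hasDerivAt_cexp_integral_Iic (q.integrable_mul r)
      (q.continuous.mul r.continuous).continuousAt _
  have hE0 (x : ℝ) : E x ≠ 0 := by rw [hE]; exact exp_ne_zero _
  have hR (x : ℝ) : HasDerivAt (fun u ↦ ∫ y in Ioi u, r y) (-r x) x :=
    hasDerivAt_integral_Ioi r.integrable r.continuous.continuousAt
  refine ⟨fun x ↦ ?_, fun x ↦ ?_⟩
  · refine ((((hE' x).inv (hE0 x)).const_mul _).mul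
      (((q.differentiableAt.hasDerivAt.const_mul (I / 2)).mul (hR x)).const_sub 1)).congr_deriv ?_
    rw [hp, zpow_neg, zpow_two]
    simp only [Pi.inv_apply, Pi.mul_apply]
    field_simp
    linear_combination (4 * q x ^ 2 * r x * (∫ y in Ioi x, r y) / E x) * I_sq
  · refine (((hE' x).const_mul _).mul (hR x)).congr_deriv ?_
    rw [hs]
    field_simp
    ring

theorem zero_energy_jost_phibar_ps
    (q r : SchwartzMap ℝ ℂ)
    (E : ℝ → ℂ) (hE : ∀ x, E x = Complex.exp ((I / 2) * ∫ y in Set.Iic x, q y * r y))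
    (μ : ℂ) (hμ : μ = ∫ y : ℝ, q y * r y)
    (p s : ℝ → ℂ)
    (hp : ∀ x, p x = ((I / 2) * deriv q x + (1 / 4) * (q x) ^ 2 * r x) * (E x) ^ (-2 : ℤ))
    (hs : ∀ x, s x = r x * (E x) ^ 2)
    (φb₁ φb₂ : ℝ → ℂ)
    (hφb₁ : ∀ x, φb₁ x = Complex.exp (I * μ / 2) * (E x)⁻¹ *
      (1 - (I / 2) * q x * ∫ y in Set.Ioi x, r y))
    (hφb₂ : ∀ x, φb₂ x = -Complex.exp (I * μ / 2) * E x * ∫ y in Set.Ioi x, r y) :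
    (∀ x, HasDerivAt φb₁ (p x * φb₂ x) x) ∧ (∀ x, HasDerivAt φb₂ (s x * φb₁ x) x) :=
  zero_energy_jost_phibar_ps_general q r E hE μ p s hp hs φb₁ φb₂ hφb₁ hφb₂
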